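/- (Syzygy criterion) Let p^[π] ∈ I^[Σ] and let G^[Σ] be a labelled Gröbner basis of I^[Σ] up to signature s(π). If there exists a syzygy σ ∈ Σ and words a, b with s(π) = a·s(σ)·b, then p^[π] regular s-reduces to zero by G^[Σ]. -/

import Mathlib

open Finsupp

/-- The free algebra `K⟨X⟩`, realized as the monoid algebra of the free monoid. -/
abbrev FreeAlg (K X : Type*) [Field K] := MonoidAlgebra K (FreeMonoid X)

/-- Module monomials `a εᵢ b` of the free bimodule of rank `r`. -/
structure MonMod (X : Type*) (r : ℕ) where
  left : FreeMonoid X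
  idx : Fin r
  right : FreeMonoid X

/-- The free bimodule `Σ = (K⟨X⟩ ⊗ K⟨X⟩)^r`, realized as the span of module monomials. -/
abbrev FreeBimod (K X : Type*) [Field K] (r : ℕ) := MonMod X r →₀ K

/-- Two-sided action of a pair of words on a module monomial: `a·(c εᵢ d)·b = (ac) εᵢ (db)`. -/
def act {X : Type*} {r : ℕ} (a b : FreeMonoid X) (μ : MonMod X r) : MonMod X r :=
  ⟨a * μ.left, μ.idx, μ.right * b⟩

/-- The monomial `w` as an element of the free algebra. -/
noncomputable def mon (K : Type*) [Field K] {X : Type*} (w : FreeMonoid X) : FreeAlg K X :=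
  MonoidAlgebra.of K (FreeMonoid X) w

/-- The evaluation homomorphism `Σ → K⟨X⟩`, `εᵢ ↦ fᵢ`. -/
noncomputable def evalS {K X : Type*} [Field K] {r : ℕ} (F : Fin r → FreeAlg K X)
    (α : FreeBimod K X r) : FreeAlg K X :=
  α.sum fun μ c => c • (mon K μ.left * F μ.idx * mon K μ.right)

section Orders

variable {K X : Type*} [Field K] [LinearOrder (FreeMonoid X)] {r : ℕ}
  [LinearOrder (MonMod X r)]

/-- The signature of a module element: the largest module monomial of its support
(`⊥` for the zero element). -/
noncomputable def sigW (α : FreeBimod K X r) : WithBot (MonMod X r) := α.support.max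

/-- The leading monomial of a nonzero polynomial (junk value `1` for `0`). -/
noncomputable def lmon (p : FreeAlg K X) : FreeMonoid X :=
  if h : p.coeff.support.Nonempty then p.coeff.support.max' h else 1

/-- The leading coefficient. -/
noncomputable def lcoeff (p : FreeAlg K X) : K := p.coeff (lmon p)

/-- The leading term. -/
noncomputable def lterm (p : FreeAlg K X) : FreeAlg K X :=
  MonoidAlgebra.single (lmon p) (lcoeff p)

/-- `f^[α]` is top s-reducible by the set `G^[Σ]`. -/
def TopSRed (G : Set (FreeAlg K X × FreeBimod K X r)) (f : FreeAlg K X)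
    (α : FreeBimod K X r) : Prop :=
  ∃ g γ, (g, γ) ∈ G ∧ g ≠ 0 ∧ ∃ a b : FreeMonoid X,
    a * lmon g * b = lmon f ∧ WithBot.map (act a b) (sigW γ) ≤ sigW α

/-- `f^[α]` is singular top s-reducible by `G^[Σ]`. -/
def SingTopSRed (G : Set (FreeAlg K X × FreeBimod K X r)) (f : FreeAlg K X)
    (α : FreeBimod K X r) : Prop :=
  f ≠ 0 ∧ ∃ g γ, (g, γ) ∈ G ∧ g ≠ 0 ∧ ∃ a b : FreeMonoid X,
    a * lmon g * b = lmon f ∧ WithBot.map (act a b) (sigW γ) = sigW α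

/-- `f^[α]` admits a regular s-reduction by `G^[Σ]`. -/
def RegSRedible (G : Set (FreeAlg K X × FreeBimod K X r)) (f : FreeAlg K X)
    (α : FreeBimod K X r) : Prop :=
  ∃ g γ, (g, γ) ∈ G ∧ g ≠ 0 ∧ ∃ a b : FreeMonoid X,
    a * lmon g * b ∈ f.coeff.support ∧ WithBot.map (act a b) (sigW γ) < sigW α

/-- `f^[α]` admits a regular *top* s-reduction by `G^[Σ]`. -/
def RegTopSRedible (G : Set (FreeAlg K X × FreeBimod K X r)) (f : FreeAlg K X)
    (α : FreeBimod K X r) : Prop :=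
  f ≠ 0 ∧ ∃ g γ, (g, γ) ∈ G ∧ g ≠ 0 ∧ ∃ a b : FreeMonoid X,
    a * lmon g * b = lmon f ∧ WithBot.map (act a b) (sigW γ) < sigW α

/-- Result of one s-reduction step of `f^[α]` by `a g^[γ] b`. -/
noncomputable def sredResult (f : FreeAlg K X) (α : FreeBimod K X r)
    (g : FreeAlg K X) (γ : FreeBimod K X r) (a b : FreeMonoid X) :
    FreeAlg K X × FreeBimod K X r :=
  (f - (f.coeff (a * lmon g * b) * (lcoeff g)⁻¹) • (mon K a * g * mon K b),
   α - (f.coeff (a * lmon g * b) * (lcoeff g)⁻¹) • Finsupp.mapDomain (act a b) γ)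

/-- One s-reduction step by `G^[Σ]`. -/
def SRedStep (G : Set (FreeAlg K X × FreeBimod K X r))
    (p q : FreeAlg K X × FreeBimod K X r) : Prop :=
  ∃ g γ, (g, γ) ∈ G ∧ g ≠ 0 ∧ ∃ a b : FreeMonoid X,
    a * lmon g * b ∈ p.1.coeff.support ∧ WithBot.map (act a b) (sigW γ) ≤ sigW p.2 ∧
    q = sredResult p.1 p.2 g γ a b

/-- One *regular* s-reduction step by `G^[Σ]`. -/
def RegSRedStep (G : Set (FreeAlg K X × FreeBimod K X r))
    (p q : FreeAlg K X × FreeBimod K X r) : Prop :=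
  ∃ g γ, (g, γ) ∈ G ∧ g ≠ 0 ∧ ∃ a b : FreeMonoid X,
    a * lmon g * b ∈ p.1.coeff.support ∧ WithBot.map (act a b) (sigW γ) < sigW p.2 ∧
    q = sredResult p.1 p.2 g γ a b

/-- `p` s-reduces to zero by `G^[Σ]`. -/
def SRedToZero (G : Set (FreeAlg K X × FreeBimod K X r))
    (p : FreeAlg K X × FreeBimod K X r) : Prop :=
  ∃ σ : FreeBimod K X r, Relation.ReflTransGen (SRedStep G) p (0, σ)

/-- `p` regular s-reduces to zero by `G^[Σ]`. -/
def RegSRedToZero (G : Set (FreeAlg K X × FreeBimod K X r))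
    (p : FreeAlg K X × FreeBimod K X r) : Prop :=
  ∃ σ : FreeBimod K X r, Relation.ReflTransGen (RegSRedStep G) p (0, σ)

/-- `G^[Σ] ⊆ I^[Σ]`: labelled polynomials with nonzero polynomial part. -/
def InLab (F : Fin r → FreeAlg K X) (G : Set (FreeAlg K X × FreeBimod K X r)) : Prop :=
  ∀ p ∈ G, p.1 = evalS F p.2 ∧ p.1 ≠ 0

/-- `G^[Σ]` is a labelled Gröbner basis of `I^[Σ]`. -/
def LabGB (F : Fin r → FreeAlg K X) (G : Set (FreeAlg K X × FreeBimod K X r)) : Prop :=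
  InLab F G ∧ ∀ (f : FreeAlg K X) (α : FreeBimod K X r), f = evalS F α → SRedToZero G (f, α)

/-- `G^[Σ]` is a labelled Gröbner basis of `I^[Σ]` up to signature `σ`. -/
def LabGBUpTo (F : Fin r → FreeAlg K X) (G : Set (FreeAlg K X × FreeBimod K X r))
    (σ : MonMod X r) : Prop :=
  InLab F G ∧ ∀ (f : FreeAlg K X) (α : FreeBimod K X r), f = evalS F α →
    sigW α < (σ : WithBot (MonMod X r)) → SRedToZero G (f, α)

/-- `G^[Σ]` is a *minimal* labelled Gröbner basis of `I^[Σ]`. -/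
def MinLabGB (F : Fin r → FreeAlg K X) (G : Set (FreeAlg K X × FreeBimod K X r)) : Prop :=
  LabGB F G ∧ ∀ p ∈ G, ¬ TopSRed (G \ {p}) p.1 p.2

end Orders

/-!
Subtracting from `π` the multiple `c · aσb` of the syzygy that cancels its leading module
term leaves the polynomial `p` unchanged and lowers the signature below `s(π)`, so by the
Gröbner basis hypothesis `p^[π - c·aσb]` s-reduces to zero. Adding `c · aσb` back to every
label of that reduction raises each label's signature to exactly `s(π)`, while the
signatures of the reducers stay at most those of the old labels, hence below `s(π)`: every
step becomes regular.
-/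

section SyzygyCriterion

variable {K X : Type*} [Field K] {r : ℕ}

lemma evalS_eq_linearCombination (F : Fin r → FreeAlg K X) (α : FreeBimod K X r) :
    evalS F α = Finsupp.linearCombination K
      (fun μ : MonMod X r => mon K μ.left * F μ.idx * mon K μ.right) α :=
  (Finsupp.linearCombination_apply K α).symm

lemma evalS_sub (F : Fin r → FreeAlg K X) (α β : FreeBimod K X r) :
    evalS F (α - β) = evalS F α - evalS F β := by
  simp only [evalS_eq_linearCombination, map_sub]

lemma evalS_smul_mapDomain_act (F : Fin r → FreeAlg K X) (c : K) (a b : FreeMonoid X)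
    (σ : FreeBimod K X r) :
    evalS F (c • Finsupp.mapDomain (act a b) σ) = c • (mon K a * evalS F σ * mon K b) := by
  rw [evalS_eq_linearCombination, evalS_eq_linearCombination, map_smul,
    Finsupp.linearCombination_mapDomain, Finsupp.linearCombination_apply,
    Finsupp.linearCombination_apply, Finsupp.sum, Finsupp.sum, Finset.mul_sum, Finset.sum_mul]
  congr 1
  refine Finset.sum_congr rfl fun μ _ => ?_
  simp only [Function.comp_apply, act, mon, map_mul, mul_smul_comm, smul_mul_assoc, mul_assoc]

lemma act_injective (a b : FreeMonoid X) : Function.Injective (act (r := r) a b) := by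
  rintro ⟨u, i, v⟩ ⟨u', i', v'⟩ h
  simp only [act, MonMod.mk.injEq] at h ⊢
  exact ⟨mul_left_cancel h.1, h.2.1, mul_right_cancel h.2.2⟩

lemma sredResult_add_label [LinearOrder (FreeMonoid X)] (f : FreeAlg K X)
    (α δ : FreeBimod K X r) (g : FreeAlg K X) (γ : FreeBimod K X r) (a b : FreeMonoid X) :
    sredResult f (α + δ) g γ a b =
      ((sredResult f α g γ a b).1, (sredResult f α g γ a b).2 + δ) :=
  Prod.ext rfl (add_sub_right_comm α δ _)

section Signature

variable [LinearOrder (MonMod X r)]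

variable (X r) in
def ActMonotone : Prop := ∀ a b : FreeMonoid X, Monotone (act (r := r) a b)

lemma sigW_lt_coe_iff {α : FreeBimod K X r} {m : MonMod X r} :
    sigW α < (m : WithBot (MonMod X r)) ↔ ∀ μ ∈ α.support, μ < m := by
  simp only [sigW, Finset.max_eq_sup_coe, Finset.sup_lt_iff (WithBot.bot_lt_coe m),
    WithBot.coe_lt_coe]

lemma sigW_sub_le (α β : FreeBimod K X r) : sigW (α - β) ≤ max (sigW α) (sigW β) :=
  (Finset.max_mono Finsupp.support_sub).trans_eq Finset.max_union

lemma sigW_smul_le (c : K) (α : FreeBimod K X r) : sigW (c • α) ≤ sigW α :=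
  Finset.max_mono Finsupp.support_smul

lemma sigW_smul {c : K} (hc : c ≠ 0) (α : FreeBimod K X r) : sigW (c • α) = sigW α := by
  rw [sigW, sigW, Finsupp.support_smul_eq hc]

lemma sigW_add_of_lt {α β : FreeBimod K X r} (h : sigW α < sigW β) :
    sigW (α + β) = sigW β := by
  obtain ⟨m, hm⟩ : ∃ m : MonMod X r, sigW β = m :=
    Finset.max_of_nonempty (Finsupp.support_nonempty_iff.2 fun hβ => by simp [hβ, sigW] at h)
  have hαm : α m = 0 := Finsupp.notMem_support_iff.1 fun hm' =>
    (Finset.le_max hm').not_gt (h.trans_eq hm)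
  have hmem : m ∈ (α + β).support := by
    rw [Finsupp.mem_support_iff, Finsupp.add_apply, hαm, zero_add]
    exact Finsupp.mem_support_iff.1 (Finset.mem_of_max hm)
  refine le_antisymm ?_ (hm ▸ Finset.le_max hmem)
  exact (Finset.max_mono Finsupp.support_add).trans
    (Finset.max_union.trans_le (max_le h.le le_rfl))

lemma sigW_sub_lt_of_apply_eq {α β : FreeBimod K X r} {m : MonMod X r}
    (hα : sigW α = m) (hβ : sigW β = m) (h : α m = β m) :
    sigW (α - β) < (m : WithBot (MonMod X r)) := by
  refine sigW_lt_coe_iff.2 fun μ hμ => lt_of_le_of_ne ?_ ?_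
  · have := (Finset.le_max hμ).trans (sigW_sub_le α β)
    rwa [hα, hβ, max_self, WithBot.coe_le_coe] at this
  · rintro rfl
    exact Finsupp.mem_support_iff.1 hμ (by rw [Finsupp.sub_apply, h, sub_self])

lemma sigW_mapDomain_act (hmod : ActMonotone X r) (a b : FreeMonoid X) (α : FreeBimod K X r) :
    sigW (Finsupp.mapDomain (act a b) α) = WithBot.map (act a b) (sigW α) := by
  rw [sigW, sigW, Finsupp.mapDomain_support_of_injective (act_injective a b),
    Finset.max_eq_sup_coe, Finset.max_eq_sup_coe, Finset.sup_image,
    Finset.apply_sup_eq_sup_comp_of_linearOrder _ (hmod a b).withBot_map rfl]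
  rfl

end Signature

section Reduction

variable [LinearOrder (FreeMonoid X)] [LinearOrder (MonMod X r)]
  {G : Set (FreeAlg K X × FreeBimod K X r)}

lemma SRedStep.sigW_snd_le (hmod : ActMonotone X r) {x y : FreeAlg K X × FreeBimod K X r}
    (h : SRedStep G x y) :
    sigW y.2 ≤ sigW x.2 := by
  obtain ⟨g, γ, -, -, a, b, -, hsig, rfl⟩ := h
  refine (sigW_sub_le _ _).trans (max_le le_rfl ?_)
  exact (sigW_smul_le _ _).trans ((sigW_mapDomain_act hmod a b γ).trans_le hsig)

lemma SRedStep.regSRedStep_add_label {x y : FreeAlg K X × FreeBimod K X r}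
    (h : SRedStep G x y) {δ : FreeBimod K X r} (hx : sigW x.2 < sigW δ) :
    RegSRedStep G (x.1, x.2 + δ) (y.1, y.2 + δ) := by
  obtain ⟨g, γ, hg, hg0, a, b, hsupp, hsig, rfl⟩ := h
  refine ⟨g, γ, hg, hg0, a, b, hsupp, ?_, (sredResult_add_label ..).symm⟩
  rw [sigW_add_of_lt hx]
  exact hsig.trans_lt hx

lemma reflTransGen_regSRedStep_add_label (hmod : ActMonotone X r)
    {x y : FreeAlg K X × FreeBimod K X r}
    (h : Relation.ReflTransGen (SRedStep G) x y) {δ : FreeBimod K X r}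
    (hx : sigW x.2 < sigW δ) :
    Relation.ReflTransGen (RegSRedStep G) (x.1, x.2 + δ) (y.1, y.2 + δ) := by
  induction h using Relation.ReflTransGen.head_induction_on with
  | refl => rfl
  | head hstep _ ih =>
    exact .head (hstep.regSRedStep_add_label hx)
      (ih ((hstep.sigW_snd_le hmod).trans_lt hx))

end Reduction

end SyzygyCriterion

theorem syzygy_criterion_general {K X : Type*} [Field K] {r : ℕ}
    [LinearOrder (FreeMonoid X)]
    [LinearOrder (MonMod X r)]
    (hmod : ∀ (a b : FreeMonoid X) (μ ν : MonMod X r), μ ≤ ν → act a b μ ≤ act a b ν)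
    (F : Fin r → FreeAlg K X) (G : Set (FreeAlg K X × FreeBimod K X r))
    (p : FreeAlg K X) (π : FreeBimod K X r) (sπ : MonMod X r)
    (hp : p = evalS F π) (hsπ : sigW π = (sπ : WithBot (MonMod X r)))
    (hGB : LabGBUpTo F G sπ)
    (σ : FreeBimod K X r) (hσ : evalS F σ = 0)
    (sσ : MonMod X r) (hsσ : sigW σ = (sσ : WithBot (MonMod X r)))
    (a b : FreeMonoid X) (hdiv : sπ = act a b sσ) :
    RegSRedToZero G (p, π) := by
  have hσ0 : σ sσ ≠ 0 := Finsupp.mem_support_iff.1 (Finset.mem_of_max hsσ)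
  set c : K := π sπ * (σ sσ)⁻¹
  have hc : c ≠ 0 := mul_ne_zero (Finsupp.mem_support_iff.1 (Finset.mem_of_max hsπ))
    (inv_ne_zero hσ0)
  set δ : FreeBimod K X r := c • Finsupp.mapDomain (act a b) σ
  have hδ_syz : evalS F δ = 0 := by
    rw [evalS_smul_mapDomain_act, hσ, mul_zero, zero_mul, smul_zero]
  have hδ_sig : sigW δ = sπ := by
    rw [sigW_smul hc, sigW_mapDomain_act hmod, hsσ, WithBot.map_coe, hdiv]
  have hδ_lead : π sπ = δ sπ := by
    rw [hdiv, Finsupp.smul_apply, Finsupp.mapDomain_apply (act_injective a b), smul_eq_mul,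
      mul_assoc, inv_mul_cancel₀ hσ0, mul_one, ← hdiv]
  have hlt : sigW (π - δ) < sπ := sigW_sub_lt_of_apply_eq hsπ hδ_sig hδ_lead
  obtain ⟨τ, hτ⟩ := hGB.2 p (π - δ) (by rw [evalS_sub, hδ_syz, sub_zero, hp]) hlt
  refine ⟨τ + δ, ?_⟩
  simpa using reflTransGen_regSRedStep_add_label hmod hτ (hlt.trans_eq hδ_sig.symm)

/-- **Syzygy criterion.** Let `p^[π] ∈ I^[Σ]` and let `G^[Σ]` be a labelled Gröbner
basis of `I^[Σ]` up to signature `s(π)`. If there is a syzygy `σ` and words `a, b`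
with `s(π) = a·s(σ)·b`, then `p^[π]` regular s-reduces to zero by `G^[Σ]`. -/
theorem syzygy_criterion {K X : Type*} [Field K] {r : ℕ}
    [LinearOrder (FreeMonoid X)] [WellFoundedLT (FreeMonoid X)]
    [LinearOrder (MonMod X r)] [WellFoundedLT (MonMod X r)]
    (hmon : ∀ a b u v : FreeMonoid X, u ≤ v → a * u * b ≤ a * v * b)
    (hmod : ∀ (a b : FreeMonoid X) (μ ν : MonMod X r), μ ≤ ν → act a b μ ≤ act a b ν)
    (hcomp : ∀ (u v : FreeMonoid X) (i : Fin r),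
      (u ≤ v ↔ (⟨u, i, 1⟩ : MonMod X r) ≤ ⟨v, i, 1⟩) ∧
      (u ≤ v ↔ (⟨1, i, u⟩ : MonMod X r) ≤ ⟨1, i, v⟩))
    (F : Fin r → FreeAlg K X) (G : Set (FreeAlg K X × FreeBimod K X r))
    (p : FreeAlg K X) (π : FreeBimod K X r) (sπ : MonMod X r)
    (hp : p = evalS F π) (hsπ : sigW π = (sπ : WithBot (MonMod X r)))
    (hGB : LabGBUpTo F G sπ)
    (σ : FreeBimod K X r) (hσ : evalS F σ = 0)
    (sσ : MonMod X r) (hsσ : sigW σ = (sσ : WithBot (MonMod X r)))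
    (a b : FreeMonoid X) (hdiv : sπ = act a b sσ) :
    RegSRedToZero G (p, π) :=
  syzygy_criterion_general hmod F G p π sπ hp hsπ hGB σ hσ sσ hsσ a b hdiv
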